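/- 1 - J_P is a metric on the space of probability distributions with full support on a finite set: it is symmetric, vanishes exactly when x = y, and satisfies the triangle inequality 1 - J_P(x,y) ≤ (1 - J_P(x,z)) + (1 - J_P(z,y)). -/

import Mathlib

/-
Run i.i.d. rate-one exponential clocks `t j` and let `H(x)` be the index minimising `t j / x j`.
Conditioning on `t i`, the event `H(x) = H(y) = i` says that every other clock `t j` exceeds
`max (x j / x i) (y j / y i) * t i`, which has probability `(∑ j, max (x j / x i) (y j / y i))⁻¹`.
Hence `J_P(x, y) = Pr[H(x) = H(y)]`, and the triangle inequality for `1 - J_P` is the union bound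
`{H(x) ≠ H(y)} ⊆ {H(x) ≠ H(z)} ∪ {H(z) ≠ H(y)}`. For the identity of indiscernibles, each term
of `J_P(x, y)` is at most `min (x i) (y i)`, so `J_P(x, y) = 1` forces equality in every term.
-/

open Finset

open Classical in
/-- The probability Jaccard similarity of two nonnegative vectors. -/
noncomputable def JP {ι : Type*} [Fintype ι] (x y : ι → ℝ) : ℝ :=
  ∑ i ∈ Finset.univ.filter (fun i => 0 < x i ∧ 0 < y i),
    (∑ j, max (x j / x i) (y j / y i))⁻¹

open MeasureTheory ProbabilityTheory Real Set Function
open scoped ENNReal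

section JP

variable {ι : Type*} [Fintype ι]

lemma JP_comm (x y : ι → ℝ) : JP x y = JP y x := by
  simp only [JP, and_comm, max_comm]

lemma JP_eq_sum_of_pos {x y : ι → ℝ} (hx : ∀ i, 0 < x i) (hy : ∀ i, 0 < y i) :
    JP x y = ∑ i, (∑ j, max (x j / x i) (y j / y i))⁻¹ := by
  rw [JP, Finset.filter_true_of_mem fun i _ => ⟨hx i, hy i⟩]

lemma inv_sum_max_div_nonneg {x : ι → ℝ} (hx : ∀ i, 0 ≤ x i) (y : ι → ℝ) (i : ι) :
    0 ≤ (∑ j, max (x j / x i) (y j / y i))⁻¹ :=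
  inv_nonneg.2 <| Finset.sum_nonneg fun j _ => (div_nonneg (hx j) (hx i)).trans (le_max_left _ _)

lemma inv_sum_max_div_le {x : ι → ℝ} (hx : ∀ i, 0 < x i) (hxs : ∑ i, x i = 1) (y : ι → ℝ)
    (i : ι) : (∑ j, max (x j / x i) (y j / y i))⁻¹ ≤ x i := by
  have hsum : ∑ j, x j / x i = (x i)⁻¹ := by rw [← Finset.sum_div, hxs, one_div]
  calc (∑ j, max (x j / x i) (y j / y i))⁻¹
      ≤ (∑ j, x j / x i)⁻¹ :=
        inv_anti₀ (hsum ▸ inv_pos.2 (hx i)) (Finset.sum_le_sum fun j _ => le_max_left _ _)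
    _ = x i := by rw [hsum, inv_inv]

lemma JP_self {x : ι → ℝ} (hx : ∀ i, 0 < x i) (hxs : ∑ i, x i = 1) : JP x x = 1 := by
  rw [JP_eq_sum_of_pos hx hx, ← hxs]
  refine Finset.sum_congr rfl fun i _ => ?_
  simp only [max_self]
  rw [← Finset.sum_div, hxs, inv_div, div_one]

lemma eq_of_JP_eq_one {x y : ι → ℝ} (hx : ∀ i, 0 < x i) (hy : ∀ i, 0 < y i)
    (hxs : ∑ i, x i = 1) (hys : ∑ i, y i = 1) (h : JP x y = 1) : x = y := by
  have hxy : ∀ i, (∑ j, max (x j / x i) (y j / y i))⁻¹ = x i := fun i =>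
    (Finset.sum_eq_sum_iff_of_le fun i _ => inv_sum_max_div_le hx hxs y i).1
      (by rw [← JP_eq_sum_of_pos hx hy, h, hxs]) i (Finset.mem_univ i)
  have hyx : ∀ i, (∑ j, max (y j / y i) (x j / x i))⁻¹ = y i := fun i =>
    (Finset.sum_eq_sum_iff_of_le fun i _ => inv_sum_max_div_le hy hys x i).1
      (by rw [← JP_eq_sum_of_pos hy hx, JP_comm, h, hys]) i (Finset.mem_univ i)
  funext i
  calc x i = (∑ j, max (x j / x i) (y j / y i))⁻¹ := (hxy i).symm
    _ = (∑ j, max (y j / y i) (x j / x i))⁻¹ := by simp only [max_comm]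
    _ = y i := hyx i

end JP

namespace ProbabilityTheory

lemma expMeasure_eq_withDensity (r : ℝ) :
    expMeasure r = volume.withDensity (exponentialPDF r) := rfl

lemma ae_nonneg_expMeasure (r : ℝ) : ∀ᵐ a ∂expMeasure r, 0 ≤ a := by
  rw [ae_iff]
  simp only [not_le]
  change expMeasure r (Iio 0) = 0
  rw [expMeasure_eq_withDensity, withDensity_apply _ measurableSet_Iio]
  exact lintegral_exponentialPDF_of_nonpos le_rfl

lemma expMeasure_Ioi {r b : ℝ} (hr : 0 < r) (hb : 0 ≤ b) :
    expMeasure r (Ioi b) = ENNReal.ofReal (exp (-(r * b))) := by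
  have := isProbabilityMeasure_expMeasure hr
  have hIic : expMeasure r (Iic b) = ENNReal.ofReal (1 - exp (-(r * b))) := by
    rw [expMeasure_eq_withDensity, withDensity_apply _ measurableSet_Iic,
      lintegral_exponentialPDF_eq_antiDeriv hr, if_pos hb]
  have hexp : exp (-(r * b)) ≤ 1 := exp_le_one_iff.2 (by nlinarith)
  rw [← compl_Iic, prob_compl_eq_one_sub measurableSet_Iic, hIic, ← ENNReal.ofReal_one,
    ← ENNReal.ofReal_sub _ (sub_nonneg.2 hexp), sub_sub_cancel]

lemma lintegral_exp_neg_mul_expMeasure {r s : ℝ} (hr : 0 < r) (hs : 0 ≤ s) :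
    ∫⁻ a, ENNReal.ofReal (exp (-(s * a))) ∂expMeasure r = ENNReal.ofReal (r / (r + s)) := by
  have hpdf : ∀ a, exponentialPDF r a * ENNReal.ofReal (exp (-(s * a)))
      = ENNReal.ofReal (r / (r + s)) * exponentialPDF (r + s) a := by
    intro a
    rcases le_or_gt 0 a with ha | ha
    · rw [exponentialPDF_of_nonneg ha, exponentialPDF_of_nonneg ha,
        ← ENNReal.ofReal_mul (by positivity), ← ENNReal.ofReal_mul (by positivity)]
      congr 1
      have : r + s ≠ 0 := by positivity
      field_simp
      rw [← Real.exp_add]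
      ring_nf
    · simp [exponentialPDF_of_neg ha]
  have hmeas (r : ℝ) : Measurable (exponentialPDF r) :=
    (measurable_exponentialPDFReal r).ennreal_ofReal
  rw [expMeasure_eq_withDensity, lintegral_withDensity_eq_lintegral_mul _ (hmeas r)
      (by fun_prop)]
  simp only [Pi.mul_apply, hpdf]
  rw [lintegral_const_mul _ (hmeas _),
    lintegral_exponentialPDF_eq_one (by positivity), mul_one]

instance : IsProbabilityMeasure (expMeasure 1) := isProbabilityMeasure_expMeasure one_pos

end ProbabilityTheory

noncomputable abbrev expClocks (n : ℕ) : Measure (Fin n → ℝ) := Measure.pi fun _ => expMeasure 1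

/-- Fubini at coordinate `i`: given `t i = a ≥ 0`, the other clocks pass their thresholds with
probability `exp (-(S * a))`, `S = ∑ j ≠ i, c j`, and `∫ exp (-(S * a)) d Exp(1) = 1 / (1 + S)`. -/
lemma expClocks_setOf_forall_ne_mul_lt {n : ℕ} {c : Fin n → ℝ} (hc : ∀ j, 0 ≤ c j) {i : Fin n}
    (hci : c i = 1) :
    expClocks n {t | ∀ j ≠ i, c j * t i < t j} = ENNReal.ofReal (∑ j, c j)⁻¹ := by
  obtain ⟨m, rfl⟩ : ∃ m, n = m + 1 := Nat.exists_eq_succ_of_ne_zero i.pos.ne'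
  set S := ∑ j : Fin m, c (i.succAbove j)
  set B : Set (ℝ × (Fin m → ℝ)) := {p | ∀ j, c (i.succAbove j) * p.1 < p.2 j}
  have hB : MeasurableSet B := by
    simp only [B, Set.ofPred_forall]
    exact .iInter fun j => measurableSet_lt (by fun_prop) (by fun_prop)
  have hpre : MeasurableEquiv.piFinSuccAbove (fun _ => ℝ) i ⁻¹' B
      = {t | ∀ j ≠ i, c j * t i < t j} := by
    ext t
    rw [Set.mem_ofPred_eq, Fin.forall_iff_succAbove i]
    simp [B, Fin.succAbove_ne, Fin.removeNth]
  have hslice : ∀ a, 0 ≤ a →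
      Measure.pi (fun _ : Fin m => expMeasure 1) (Prod.mk a ⁻¹' B)
        = ENNReal.ofReal (exp (-(S * a))) := by
    intro a ha
    have : Prod.mk a ⁻¹' B = Set.pi univ fun j => Ioi (c (i.succAbove j) * a) := by
      ext w; simp [B, mul_comm]
    rw [this, Measure.pi_pi]
    simp only [expMeasure_Ioi one_pos (mul_nonneg (hc _) ha), one_mul]
    rw [← ENNReal.ofReal_prod_of_nonneg fun j _ => (exp_nonneg _), ← Real.exp_sum,
      Finset.sum_mul, ← Finset.sum_neg_distrib]
  rw [← hpre, (measurePreserving_piFinSuccAbove _ i).measure_preimage hB.nullMeasurableSet,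
    Measure.prod_apply hB, lintegral_congr_ae ((ae_nonneg_expMeasure 1).mono hslice),
    lintegral_exp_neg_mul_expMeasure one_pos (Finset.sum_nonneg fun j _ => hc _),
    Fin.sum_univ_succAbove c i, hci, one_div]

/-- The event `H(x) = i` for the coupling `H(x) = argmin_j t j / x j` driven by exponential
clocks `t`; ties have probability zero and are left out. -/
def strictArgminSet {ι : Type*} (x : ι → ℝ) (i : ι) : Set (ι → ℝ) :=
  {t | ∀ j ≠ i, t i / x i < t j / x j}

def hashAgree {ι : Type*} (x y : ι → ℝ) : Set (ι → ℝ) :=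
  ⋃ i, strictArgminSet x i ∩ strictArgminSet y i

section Coupling

variable {ι : Type*}

lemma measurableSet_strictArgminSet [Countable ι] (x : ι → ℝ) (i : ι) :
    MeasurableSet (strictArgminSet x i) := by
  simp only [strictArgminSet, Set.ofPred_forall]
  exact .iInter fun j => .iInter fun _ => measurableSet_lt (by fun_prop) (by fun_prop)

lemma measurableSet_hashAgree [Countable ι] (x y : ι → ℝ) : MeasurableSet (hashAgree x y) :=
  .iUnion fun i => (measurableSet_strictArgminSet x i).inter (measurableSet_strictArgminSet y i)

lemma pairwise_disjoint_strictArgminSet (x : ι → ℝ) :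
    Pairwise (Disjoint on strictArgminSet x) := fun i k hik =>
  Set.disjoint_left.2 fun _ hi hk => (hi k hik.symm).asymm (hk i hik)

lemma hashAgree_inter_subset (x y z : ι → ℝ) :
    hashAgree x z ∩ hashAgree z y ⊆ hashAgree x y := by
  rintro t ⟨hxz, hzy⟩
  obtain ⟨i, hxi, hzi⟩ := Set.mem_iUnion.1 hxz
  obtain ⟨k, hzk, hyk⟩ := Set.mem_iUnion.1 hzy
  obtain rfl : i = k := by
    by_contra hik
    exact Set.disjoint_left.1 (pairwise_disjoint_strictArgminSet z hik) hzi hzk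
  exact Set.mem_iUnion.2 ⟨i, hxi, hyk⟩

end Coupling

lemma strictArgminSet_inter_ae_eq {n : ℕ} {x y : Fin n → ℝ} (hx : ∀ i, 0 < x i)
    (hy : ∀ i, 0 < y i) (i : Fin n) :
    (strictArgminSet x i ∩ strictArgminSet y i : Set (Fin n → ℝ))
      =ᵐ[expClocks n] {t | ∀ j ≠ i, max (x j / x i) (y j / y i) * t i < t j} := by
  have hlt {w : Fin n → ℝ} (hw : ∀ i, 0 < w i) (t : Fin n → ℝ) (j : Fin n) :
      t i / w i < t j / w j ↔ w j / w i * t i < t j := by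
    rw [lt_div_iff₀ (hw j), div_mul_comm]
  rw [Filter.eventuallyEq_set]
  filter_upwards [(Measure.tendsto_eval_ae_ae (i := i)).eventually (ae_nonneg_expMeasure 1)]
    with t ht
  simp only [strictArgminSet, Set.mem_inter_iff, Set.mem_ofPred_eq, hlt hx, hlt hy,
    max_mul_of_nonneg _ _ ht, max_lt_iff]
  exact ⟨fun ⟨hx', hy'⟩ j hj => ⟨hx' j hj, hy' j hj⟩,
    fun h => ⟨fun j hj => (h j hj).1, fun j hj => (h j hj).2⟩⟩

lemma expClocks_strictArgminSet_inter {n : ℕ} {x y : Fin n → ℝ} (hx : ∀ i, 0 < x i)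
    (hy : ∀ i, 0 < y i) (i : Fin n) :
    expClocks n (strictArgminSet x i ∩ strictArgminSet y i)
      = ENNReal.ofReal (∑ j, max (x j / x i) (y j / y i))⁻¹ := by
  rw [measure_congr (strictArgminSet_inter_ae_eq hx hy i)]
  refine expClocks_setOf_forall_ne_mul_lt
    (fun j => (div_pos (hx j) (hx i)).le.trans (le_max_left _ _)) ?_
  rw [div_self (hx i).ne', div_self (hy i).ne', max_self]

lemma expClocks_hashAgree {n : ℕ} {x y : Fin n → ℝ} (hx : ∀ i, 0 < x i) (hy : ∀ i, 0 < y i) :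
    expClocks n (hashAgree x y) = ENNReal.ofReal (JP x y) := by
  have hdisj : Pairwise (Disjoint on fun i => strictArgminSet x i ∩ strictArgminSet y i) :=
    fun i k hik => ((pairwise_disjoint_strictArgminSet x) hik).mono inter_subset_left
      inter_subset_left
  rw [hashAgree, measure_iUnion hdisj fun i =>
      (measurableSet_strictArgminSet x i).inter (measurableSet_strictArgminSet y i),
    tsum_fintype, JP_eq_sum_of_pos hx hy,
    ENNReal.ofReal_sum_of_nonneg fun i _ => inv_sum_max_div_nonneg (fun j => (hx j).le) y i]
  exact Finset.sum_congr rfl fun i _ => expClocks_strictArgminSet_inter hx hy i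

lemma measureReal_hashAgree_compl {n : ℕ} {x y : Fin n → ℝ} (hx : ∀ i, 0 < x i)
    (hy : ∀ i, 0 < y i) : (expClocks n).real (hashAgree x y)ᶜ = 1 - JP x y := by
  have hJP : 0 ≤ JP x y := by
    rw [JP_eq_sum_of_pos hx hy]
    exact Finset.sum_nonneg fun i _ => inv_sum_max_div_nonneg (fun j => (hx j).le) y i
  rw [measureReal_compl (measurableSet_hashAgree x y), probReal_univ, measureReal_def,
    expClocks_hashAgree hx hy, ENNReal.toReal_ofReal hJP]

lemma JP_triangle {n : ℕ} {x y z : Fin n → ℝ} (hx : ∀ i, 0 < x i) (hy : ∀ i, 0 < y i)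
    (hz : ∀ i, 0 < z i) : 1 - JP x y ≤ (1 - JP x z) + (1 - JP z y) := by
  rw [← measureReal_hashAgree_compl hx hy, ← measureReal_hashAgree_compl hx hz,
    ← measureReal_hashAgree_compl hz hy]
  calc (expClocks n).real (hashAgree x y)ᶜ
      ≤ (expClocks n).real ((hashAgree x z)ᶜ ∪ (hashAgree z y)ᶜ) := by
        rw [← Set.compl_inter]
        exact measureReal_mono (Set.compl_subset_compl.2 (hashAgree_inter_subset x y z))
    _ ≤ _ := measureReal_union_le _ _

theorem one_sub_JP_is_metric_general {n : ℕ} (x y z : Fin n → ℝ)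
    (hx : ∀ i, 0 < x i) (hy : ∀ i, 0 < y i) (hz : ∀ i, 0 < z i)
    (hxs : ∑ i, x i = 1) (hys : ∑ i, y i = 1) :
    (1 - JP x y = 1 - JP y x) ∧
    (1 - JP x y = 0 ↔ x = y) ∧
    (1 - JP x y ≤ (1 - JP x z) + (1 - JP z y)) := by
  refine ⟨by rw [JP_comm], ?_, JP_triangle hx hy hz⟩
  rw [sub_eq_zero, eq_comm]
  exact ⟨eq_of_JP_eq_one hx hy hxs hys, by rintro rfl; exact JP_self hx hxs⟩

/-- `1 - J_P` is a metric on full-support probability distributions on a finite set: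
symmetric, vanishing exactly at equality, and satisfying the triangle inequality. -/
theorem one_sub_JP_is_metric {n : ℕ} (x y z : Fin n → ℝ)
    (hx : ∀ i, 0 < x i) (hy : ∀ i, 0 < y i) (hz : ∀ i, 0 < z i)
    (hxs : ∑ i, x i = 1) (hys : ∑ i, y i = 1) (hzs : ∑ i, z i = 1) :
    (1 - JP x y = 1 - JP y x) ∧
    (1 - JP x y = 0 ↔ x = y) ∧
    (1 - JP x y ≤ (1 - JP x z) + (1 - JP z y)) :=
  one_sub_JP_is_metric_general x y z hx hy hz hxs hys
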